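/- Every finite digraph G = (V, A) has an injective overlap labeling of length at most 2^(p+1) − 1, where p = max{Δ⁺(G), Δ⁻(G)}. Consequently, the readability of every digraph is well-defined (finite). -/

import Mathlib

/-- `OvAt s t k` : `s` overlaps `t` by `k`, i.e. `k` is positive, at most both lengths,
and the length-`k` suffix of `s` equals the length-`k` prefix of `t`. -/
def OvAt {α : Type} (s t : List α) (k : ℕ) : Prop :=
  0 < k ∧ k ≤ s.length ∧ k ≤ t.length ∧ s.drop (s.length - k) = t.take k

/-- `s` overlaps `t` (by some positive length). -/
def Overlaps {α : Type} (s t : List α) : Prop := ∃ k, OvAt s t k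

/-- the minimum positive overlap length of `s` over `t` (0 if none exists). -/
noncomputable def ovMin {α : Type} (s t : List α) : ℕ := sInf {k | OvAt s t k}

/-- A bipartite graph, given as a relation `E` between the two parts `S` and `T`,
has an overlap labeling with all strings of length `k`. -/
def HasOLab {S T : Type} (E : S → T → Prop) (k : ℕ) : Prop :=
  ∃ (α : Type) (ℓS : S → List α) (ℓT : T → List α),
    (∀ u, (ℓS u).length = k) ∧ (∀ v, (ℓT v).length = k) ∧
    ∀ u v, E u v ↔ Overlaps (ℓS u) (ℓT v)

/-- The readability of a bipartite graph: minimum length of an overlap labeling. -/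
noncomputable def readability {S T : Type} (E : S → T → Prop) : ℕ :=
  sInf {k | HasOLab E k}

/-!
By König's edge-colouring theorem (pad the adjacency matrix to a `p`-regular one and peel off
perfect matchings with Hall's theorem) the arcs are covered by `p` partial matchings `M i`.
Every vertex `v` gets blocks `pre i v` and `suf i v` of length `2^i - 1`, built level by level:
when `u → w` is an arc of `M i`, both `suf (i+1) u` and `pre (i+1) w` are
`pre i w ++ link i u :: suf i u`; otherwise the new half-block is padded with `padIn i` or
`padOut i`. The label is `pre p v ++ center v :: suf p v`. A common suffix/prefix `w` of the labels
of `u` and `v` longer than `2^p - 1` would put `center u` into the label of `v`. Otherwise, if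
`2^i ≤ |w| < 2^(i+1)`, then `w` lies in `suf (i+1) u` and `pre (i+1) v` and contains the
level-`i` letter of `suf (i+1) u` just before `suf i u`; the only level-`i` letter it can share
with `pre (i+1) v` is `link i u`, present exactly when `u → v` is in `M i`.
-/

open Finset

section EdgeColoring

variable {V : Type} [Fintype V]

theorem exists_perm_forall_ne_zero (m : V → V → ℕ) {n : ℕ} (hn : 0 < n)
    (hrow : ∀ u, ∑ v, m u v = n) (hcol : ∀ v, ∑ u, m u v = n) :
    ∃ τ : Equiv.Perm V, ∀ u, m u (τ u) ≠ 0 := by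
  suffices hall : ∀ A : Finset V, #A ≤ #{v | ∃ u ∈ A, m u v ≠ 0} by
    obtain ⟨f, hf, hfm⟩ :=
      (Fintype.all_card_le_filter_rel_iff_exists_injective (fun u v => m u v ≠ 0)).mp hall
    exact ⟨Equiv.ofBijective f (Finite.injective_iff_bijective.mp hf), hfm⟩
  intro A
  set N : Finset V := {v | ∃ u ∈ A, m u v ≠ 0}
  refine Nat.le_of_mul_le_mul_right ?_ hn
  calc #A * n = ∑ u ∈ A, ∑ v ∈ N, m u v := by
        rw [← smul_eq_mul, ← sum_const, sum_congr rfl fun u hu => ?_]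
        rw [← hrow u, sum_subset (subset_univ N)]
        intro v _ hv
        by_contra h
        exact hv (mem_filter.mpr ⟨mem_univ v, u, hu, h⟩)
    _ = ∑ v ∈ N, ∑ u ∈ A, m u v := sum_comm
    _ ≤ ∑ v ∈ N, ∑ u, m u v := sum_le_sum fun v _ => sum_le_sum_of_subset (subset_univ A)
    _ = #N * n := by simp [hcol]

theorem exists_perms_cover_of_regular [DecidableEq V] {p : ℕ} (m : V → V → ℕ)
    (hrow : ∀ u, ∑ v, m u v = p) (hcol : ∀ v, ∑ u, m u v = p) :
    ∃ σ : ℕ → Equiv.Perm V, ∀ u v, m u v ≠ 0 → ∃ k < p, σ k u = v := by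
  induction p generalizing m with
  | zero =>
    refine ⟨fun _ => 1, fun u v h => (h ?_).elim⟩
    exact sum_eq_zero_iff.mp (hrow u) v (mem_univ v)
  | succ p ih =>
    obtain ⟨τ, hτ⟩ := exists_perm_forall_ne_zero m p.succ_pos hrow hcol
    set m' : V → V → ℕ := fun u v => m u v - if τ u = v then 1 else 0
    have hle : ∀ u v, (if τ u = v then 1 else 0) ≤ m u v := fun u v => by
      split_ifs with h
      · exact Nat.one_le_iff_ne_zero.mpr (h ▸ hτ u)
      · exact Nat.zero_le _
    obtain ⟨σ, hσ⟩ := ih m'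
      (fun u => by simp [m', sum_tsub_distrib _ fun v _ => hle u v, hrow])
      (fun v => by
        rw [sum_tsub_distrib _ fun u _ => hle u v, hcol]
        simp [← Equiv.eq_symm_apply])
    refine ⟨fun k => if k = p then τ else σ k, fun u v huv => ?_⟩
    by_cases h : τ u = v
    · exact ⟨p, p.lt_succ_self, by simp [h]⟩
    · obtain ⟨k, hk, hσk⟩ := hσ u v (by simpa [m', h] using huv)
      exact ⟨k, hk.trans p.lt_succ_self, by simp [hk.ne, hσk]⟩

theorem exists_regular_ge [DecidableEq V] {p : ℕ} (m : V → V → ℕ)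
    (hrow : ∀ u, ∑ v, m u v ≤ p) (hcol : ∀ v, ∑ u, m u v ≤ p) :
    ∃ m' : V → V → ℕ, (∀ u v, m u v ≤ m' u v) ∧
      (∀ u, ∑ v, m' u v = p) ∧ ∀ v, ∑ u, m' u v = p := by
  by_cases hfull : ∀ u, ∑ v, m u v = p
  · refine ⟨m, fun _ _ => le_rfl, hfull, fun v => ?_⟩
    have htotal : ∑ v, ∑ u, m u v = ∑ _v : V, p := by rw [sum_comm]; simp [hfull]
    exact (sum_eq_sum_iff_of_le fun v _ => hcol v).mp htotal v (mem_univ v)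
  · push Not at hfull
    obtain ⟨u₀, hu₀⟩ := hfull
    replace hu₀ := lt_of_le_of_ne (hrow u₀) hu₀
    have htotal : ∑ u, ∑ v, m u v < ∑ _u : V, p :=
      sum_lt_sum (fun u _ => hrow u) ⟨u₀, mem_univ u₀, hu₀⟩
    obtain ⟨v₀, -, hv₀⟩ := exists_lt_of_sum_lt (sum_comm (f := m) ▸ htotal)
    set m₁ : V → V → ℕ := fun u v => m u v + if u = u₀ ∧ v = v₀ then 1 else 0
    have hrow₁ : ∀ u, ∑ v, m₁ u v = ∑ v, m u v + if u = u₀ then 1 else 0 := fun u => by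
      simp [m₁, sum_add_distrib, ite_and]
    have hcol₁ : ∀ v, ∑ u, m₁ u v = ∑ u, m u v + if v = v₀ then 1 else 0 := fun v => by
      simp [m₁, sum_add_distrib, ite_and]
    obtain ⟨m', hle, hm'⟩ := exists_regular_ge m₁
      (fun u => by rw [hrow₁]; split_ifs with h <;> [exact h ▸ hu₀; simpa using hrow u])
      (fun v => by rw [hcol₁]; split_ifs with h <;> [exact h ▸ hv₀; simpa using hcol v])
    exact ⟨m', fun u v => (Nat.le_add_right _ _).trans (hle u v), hm'⟩
termination_by Fintype.card V * p - ∑ u, ∑ v, m u v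
decreasing_by
  simp only [sum_const, card_univ, smul_eq_mul] at htotal
  simp only [sum_add_distrib, ite_and, sum_ite_irrel, sum_ite_eq', mem_univ, ↓reduceIte,
    sum_const_zero]
  omega

theorem exists_pequiv_cover_of_degree_le (A : V → V → Prop) {p : ℕ}
    (hout : ∀ u, Nat.card {v // A u v} ≤ p) (hin : ∀ v, Nat.card {u // A u v} ≤ p) :
    ∃ M : ℕ → V ≃. V, ∀ u v, A u v ↔ ∃ i < p, M i u = some v := by
  classical
  set m : V → V → ℕ := fun u v => if A u v then 1 else 0
  obtain ⟨m', hle, hrow, hcol⟩ := exists_regular_ge m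
    (fun u => by simpa [m, Nat.card_eq_fintype_card, Fintype.card_subtype] using hout u)
    (fun v => by simpa [m, Nat.card_eq_fintype_card, Fintype.card_subtype] using hin v)
  obtain ⟨σ, hσ⟩ := exists_perms_cover_of_regular m' hrow hcol
  refine ⟨fun i => (PEquiv.ofSet {u | A u (σ i u)}).trans (σ i).toPEquiv, fun u v => ?_⟩
  simp only [PEquiv.trans_eq_some, PEquiv.ofSet_eq_some_iff, Set.mem_ofPred_eq,
    Equiv.toPEquiv_apply, Option.some.injEq, ↓existsAndEq, true_and]
  constructor
  · intro h
    have hm : m u v = 1 := if_pos h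
    obtain ⟨k, hk, rfl⟩ := hσ u v (by have := hle u v; omega)
    exact ⟨k, hk, h, rfl⟩
  · rintro ⟨i, -, h, rfl⟩
    exact h

end EdgeColoring

theorem overlaps_iff {α : Type} {s t : List α} :
    Overlaps s t ↔ ∃ w, w ≠ [] ∧ w <:+ s ∧ w <+: t := by
  constructor
  · rintro ⟨k, hk, hks, hkt, hst⟩
    refine ⟨t.take k, ?_, hst ▸ List.drop_suffix _ _, List.take_prefix _ _⟩
    simpa [List.take_eq_nil_iff] using ⟨hk.ne', (List.length_pos_iff.mp (hk.trans_le hkt))⟩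
  · rintro ⟨w, hw, ⟨a, rfl⟩, ⟨b, rfl⟩⟩
    refine ⟨w.length, List.length_pos_iff.mpr hw, by simp, by simp, ?_⟩
    simp

namespace OverlapLabel

inductive Letter (V : Type)
  | center (u : V)
  | link (i : ℕ) (u : V)
  | padIn (i : ℕ)
  | padOut (i : ℕ)

namespace Letter

variable {V : Type}

def IsBelow (n : ℕ) : Letter V → Prop
  | center _ => False
  | link i _ => i < n
  | padIn i => i < n
  | padOut i => i < n

theorem IsBelow.mono {n n' : ℕ} {x : Letter V} (hx : x.IsBelow n) (h : n ≤ n') :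
    x.IsBelow n' := by
  cases x <;> simp only [IsBelow] at * <;> omega

end Letter

open Letter

variable {V : Type} (M : ℕ → V ≃. V)

mutual
def pre : ℕ → V → List (Letter V)
  | 0, _ => []
  | i + 1, v => pre i v ++
      match (M i).symm v with
      | some u => link i u :: suf i u
      | none => List.replicate (2 ^ i) (padIn i)
def suf : ℕ → V → List (Letter V)
  | 0, _ => []
  | i + 1, u =>
      (match M i u with
      | some w => pre i w ++ [link i u]
      | none => List.replicate (2 ^ i) (padOut i)) ++ suf i u
end

theorem length_pre_suf (i : ℕ) (v : V) :
    (pre M i v).length = 2 ^ i - 1 ∧ (suf M i v).length = 2 ^ i - 1 := by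
  induction i generalizing v with
  | zero => simp [pre, suf]
  | succ i ih =>
    have := Nat.one_le_two_pow (n := i)
    constructor
    · cases h : (M i).symm v <;>
        simp only [pre, h, List.length_append, List.length_cons, List.length_replicate, ih,
          pow_succ] <;> omega
    · cases h : M i v <;>
        simp only [suf, h, List.length_append, List.length_singleton, List.length_replicate, ih,
          pow_succ] <;> omega

theorem isBelow_of_mem (i : ℕ) (v : V) :
    (∀ x ∈ pre M i v, x.IsBelow i) ∧ ∀ x ∈ suf M i v, x.IsBelow i := by
  induction i generalizing v with
  | zero => simp [pre, suf]
  | succ i ih =>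
    have below : ∀ w, ∀ x, (x ∈ pre M i w ∨ x ∈ suf M i w) → x.IsBelow (i + 1) :=
      fun w x hx => (hx.elim ((ih w).1 x) ((ih w).2 x)).mono i.le_succ
    refine ⟨fun x hx => ?_, fun x hx => ?_⟩
    · cases h : (M i).symm v <;>
        simp only [pre, h, List.mem_append, List.mem_cons, List.mem_replicate] at hx
      · rcases hx with hx | ⟨-, rfl⟩
        · exact below v x (.inl hx)
        · exact Nat.lt_succ_self i
      · rcases hx with hx | rfl | hx
        · exact below v x (.inl hx)
        · exact Nat.lt_succ_self i
        · exact below _ x (.inr hx)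
    · cases h : M i v <;>
        simp only [suf, h, List.mem_append, List.mem_singleton, List.mem_replicate] at hx
      · rcases hx with ⟨-, rfl⟩ | hx
        · exact Nat.lt_succ_self i
        · exact below v x (.inr hx)
      · rcases hx with (hx | rfl) | hx
        · exact below _ x (.inl hx)
        · exact Nat.lt_succ_self i
        · exact below v x (.inr hx)

theorem pre_prefix_pre {i j : ℕ} (h : i ≤ j) (v : V) : pre M i v <+: pre M j v := by
  induction j, h using Nat.le_induction with
  | base => exact List.prefix_rfl
  | succ j _ ih => exact ih.trans (List.prefix_append _ _)

theorem suf_suffix_suf {i j : ℕ} (h : i ≤ j) (v : V) : suf M i v <:+ suf M j v := by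
  induction j, h using Nat.le_induction with
  | base => exact List.suffix_rfl
  | succ j _ ih => exact ih.trans (List.suffix_append _ _)

theorem suf_succ_eq_pre_succ {i : ℕ} {u v : V} (h : M i u = some v) :
    suf M (i + 1) u = pre M (i + 1) v := by
  simp [pre, suf, h, (M i).eq_some_iff.mpr h]

theorem mem_pre_succ_of_not_isBelow {i : ℕ} {v : V} {x : Letter V} (hx : x ∈ pre M (i + 1) v)
    (hi : ¬ x.IsBelow i) : x = padIn i ∨ ∃ u, M i u = some v ∧ x = link i u := by
  have hbelow := fun w => isBelow_of_mem M i w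
  cases h : (M i).symm v <;>
    simp only [pre, h, List.mem_append, List.mem_cons, List.mem_replicate] at hx
  · rcases hx with hx | ⟨-, rfl⟩
    · exact absurd ((hbelow v).1 x hx) hi
    · exact .inl rfl
  · rcases hx with hx | rfl | hx
    · exact absurd ((hbelow v).1 x hx) hi
    · exact .inr ⟨_, (M i).eq_some_iff.mp h, rfl⟩
    · exact absurd ((hbelow _).2 x hx) hi

theorem eq_some_of_suffix_of_prefix {i : ℕ} {u v : V} {w : List (Letter V)}
    (hlen : 2 ^ i ≤ w.length) (hu : w <:+ suf M (i + 1) u) (hv : w <+: pre M (i + 1) v) :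
    M i u = some v := by
  have mem_w : ∀ x, x :: suf M i u <:+ suf M (i + 1) u → x ∈ w := fun x hx => by
    refine (List.suffix_of_suffix_length_le hx hu ?_).subset List.mem_cons_self
    have := Nat.one_le_two_pow (n := i)
    simp only [List.length_cons, (length_pre_suf M i u).2]
    omega
  cases h : M i u with
  | none =>
    have hx := mem_w (padOut i) <| by
      rw [suf, h, ← Nat.sub_add_cancel (Nat.one_le_two_pow (n := i)), List.replicate_succ']
      simp
    rcases mem_pre_succ_of_not_isBelow M (hv.subset hx) (by simp [IsBelow])
      with h' | ⟨_, _, h'⟩ <;> cases h'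
  | some _ =>
    have hx := mem_w (link i u) <| by simp [suf, h]
    rcases mem_pre_succ_of_not_isBelow M (hv.subset hx) (by simp [IsBelow])
      with h' | ⟨u', hu', h'⟩
    · cases h'
    · cases h'
      rwa [← h]

theorem exists_eq_some_of_suffix_of_prefix {i : ℕ} {u v : V} {w : List (Letter V)}
    (hw : w ≠ []) (hu : w <:+ suf M i u) (hv : w <+: pre M i v) : ∃ j < i, M j u = some v := by
  induction i with
  | zero => exact (hw (List.prefix_nil.mp hv)).elim
  | succ i ih =>
    by_cases hlen : 2 ^ i ≤ w.length
    · exact ⟨i, i.lt_succ_self, eq_some_of_suffix_of_prefix M hlen hu hv⟩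
    · have hlen' : w.length ≤ 2 ^ i - 1 := by omega
      obtain ⟨j, hj, h⟩ := ih
        (List.suffix_of_suffix_length_le hu (suf_suffix_suf M i.le_succ u)
          (by rw [(length_pre_suf M i u).2]; exact hlen'))
        (List.prefix_of_prefix_length_le hv (pre_prefix_pre M i.le_succ v)
          (by rw [(length_pre_suf M i v).1]; exact hlen'))
      exact ⟨j, hj.trans i.lt_succ_self, h⟩

def label (p : ℕ) (u : V) : List (Letter V) := pre M p u ++ center u :: suf M p u

theorem pre_prefix_label (p : ℕ) (u : V) : pre M p u <+: label M p u :=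
  List.prefix_append _ _

theorem center_cons_suf_suffix_label (p : ℕ) (u : V) : center u :: suf M p u <:+ label M p u :=
  List.suffix_append _ _

theorem suf_suffix_label (p : ℕ) (u : V) : suf M p u <:+ label M p u :=
  (List.suffix_cons _ _).trans (center_cons_suf_suffix_label M p u)

theorem length_label (p : ℕ) (u : V) : (label M p u).length = 2 ^ (p + 1) - 1 := by
  have := Nat.one_le_two_pow (n := p)
  simp only [label, List.length_append, length_pre_suf, List.length_cons, pow_succ]
  omega

theorem eq_of_center_mem_label {p : ℕ} {u v : V} (h : center u ∈ label M p v) : u = v := by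
  obtain ⟨hpre, hsuf⟩ := isBelow_of_mem M p v
  simp only [label, List.mem_append, List.mem_cons, center.injEq] at h
  rcases h with h | h | h
  · exact (hpre _ h).elim
  · exact h
  · exact (hsuf _ h).elim

theorem label_injective (p : ℕ) : Function.Injective (label M p) := fun u _ h =>
  eq_of_center_mem_label M <| h ▸ (center_cons_suf_suffix_label M p u).subset List.mem_cons_self

theorem overlaps_label_iff {p : ℕ} {u v : V} (huv : u ≠ v) :
    Overlaps (label M p u) (label M p v) ↔ ∃ i < p, M i u = some v := by
  rw [overlaps_iff]
  constructor
  · rintro ⟨w, hw, hu, hv⟩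
    by_cases hlen : w.length ≤ 2 ^ p - 1
    · exact exists_eq_some_of_suffix_of_prefix M hw
        (List.suffix_of_suffix_length_le hu (suf_suffix_label M p u)
          (by rw [(length_pre_suf M p u).2]; exact hlen))
        (List.prefix_of_prefix_length_le hv (pre_prefix_label M p v)
          (by rw [(length_pre_suf M p v).1]; exact hlen))
    · have hcenter : center u ∈ w :=
        (List.suffix_of_suffix_length_le (center_cons_suf_suffix_label M p u) hu
          (by rw [List.length_cons, (length_pre_suf M p u).2]; omega)).subset List.mem_cons_self
      exact (huv (eq_of_center_mem_label M (hv.subset hcenter))).elim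
  · rintro ⟨i, hi, h⟩
    refine ⟨suf M (i + 1) u, ?_, ?_, ?_⟩
    · rw [← List.length_pos_iff, (length_pre_suf M _ u).2]
      exact Nat.sub_pos_of_lt (Nat.one_lt_two_pow i.succ_ne_zero)
    · exact (suf_suffix_suf M hi u).trans (suf_suffix_label M p u)
    · rw [suf_succ_eq_pre_succ M h]
      exact (pre_prefix_pre M hi v).trans (pre_prefix_label M p v)

end OverlapLabel

open OverlapLabel

/-- Every finite digraph has an injective overlap labeling of length at most `2^(p+1) - 1`,
where `p = max{Δ⁺, Δ⁻}`; in particular readability is well defined. -/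
theorem injective_overlap_labeling_exists
    {V : Type} [Fintype V] (A : V → V → Prop) (p : ℕ)
    (hp : p = max (Finset.univ.sup fun u => Nat.card {v // A u v})
                  (Finset.univ.sup fun v => Nat.card {u // A u v})) :
    ∃ (α : Type) (ℓ : V → List α),
      Function.Injective ℓ ∧
      (∀ u, (ℓ u).length ≤ 2 ^ (p + 1) - 1) ∧
      (∀ u v, u ≠ v → (A u v ↔ Overlaps (ℓ u) (ℓ v))) := by
  have hout : ∀ u, Nat.card {v // A u v} ≤ p := fun u =>
    hp ▸ le_max_of_le_left (Finset.le_sup (f := fun u => Nat.card {v // A u v}) (mem_univ u))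
  have hin : ∀ v, Nat.card {u // A u v} ≤ p := fun v =>
    hp ▸ le_max_of_le_right (Finset.le_sup (f := fun v => Nat.card {u // A u v}) (mem_univ v))
  obtain ⟨M, hM⟩ := exists_pequiv_cover_of_degree_le A hout hin
  exact ⟨Letter V, label M p, label_injective M p, fun u => (length_label M p u).le,
    fun u v huv => (hM u v).trans (overlaps_label_iff M huv).symm⟩
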